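/- W(5,3) > 125; that is, there exists a coloring c : {1,…,125} → {1,2,3,4,5} containing no monochromatic arithmetic progression of length 3. -/
import Mathlib


/-- `c` (viewed as a coloring of `{1,…,m}`) contains a monochromatic arithmetic
progression of length `l`: there are positive `a`, `d` with `a + (l-1)d ≤ m`
and `c (a) = c (a+d) = … = c (a+(l-1)d)`. -/
def ContainsAP (l m : ℕ) (c : ℕ → ℕ) : Prop :=
  ∃ a d : ℕ, 0 < a ∧ 0 < d ∧ a + (l - 1) * d ≤ m ∧
    ∀ j : ℕ, j ≤ l - 1 → c (a + j * d) = c a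

/-- `c` is a coloring of `{1,…,m}` with colors in `{1,…,k}`. -/
def IsColoring (k m : ℕ) (c : ℕ → ℕ) : Prop :=
  ∀ i : ℕ, 1 ≤ i → i ≤ m → 1 ≤ c i ∧ c i ≤ k

/-- The van der Waerden number `W k l`: the least positive `m` such that every
coloring of `{1,…,m}` with `k` colors contains a monochromatic arithmetic
progression of length `l`. -/
noncomputable def vdW (k l : ℕ) : ℕ :=
  sInf {m : ℕ | 0 < m ∧ ∀ c : ℕ → ℕ, IsColoring k m c → ContainsAP l m c}

/-- Encoding of an explicit 5-coloring of `{1,…,125}` with no monochromatic 3-AP,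
as base-5 digits. -/
def vdwWitnessNum : ℕ :=
  2005370708905329623153447738388884140029057533153368439796697740553216808406741458575347

/-- The explicit coloring. -/
def vdwCol (n : ℕ) : ℕ := vdwWitnessNum / 5 ^ (n - 1) % 5 + 1

lemma vdwCol_isColoring : IsColoring 5 125 vdwCol := by
  intro i _ _
  unfold vdwCol
  have := Nat.mod_lt (vdwWitnessNum / 5 ^ (i - 1)) (show 0 < 5 by norm_num)
  omega

set_option maxRecDepth 10000 in
lemma vdwCol_check : ∀ a < 126, ∀ d < 63, ¬ (0 < a ∧ 0 < d ∧ a + 2 * d ≤ 125 ∧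
    vdwCol (a + d) = vdwCol a ∧ vdwCol (a + 2 * d) = vdwCol a) := by decide

lemma vdwCol_noAP : ¬ ContainsAP 3 125 vdwCol := by
  rintro ⟨a, d, ha, hd, hle, hj⟩
  have h1 := hj 1 (by norm_num)
  have h2 := hj 2 (by norm_num)
  norm_num at hle h1 h2
  exact vdwCol_check a (by omega) d (by omega) ⟨ha, hd, by omega, h1, h2⟩

/-- Infinite van der Waerden theorem for 3-APs and 5 colors. -/
lemma infinite_vdw (c : ℕ → ℕ) (hc : ∀ i, 1 ≤ i → c i ≤ 5) :
    ∃ a d : ℕ, 0 < a ∧ 0 < d ∧ c (a + d) = c a ∧ c (a + 2 * d) = c a := by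
  classical
  obtain ⟨a, ha, b, k, hk⟩ := Combinatorics.exists_mono_homothetic_copy
    ({1, 2, 3} : Finset ℕ) (fun n => (⟨c n % 6, Nat.mod_lt _ (by norm_num)⟩ : Fin 6))
  have h1 := hk 1 (by simp)
  have h2 := hk 2 (by simp)
  have h3 := hk 3 (by simp)
  simp only [smul_eq_mul] at h1 h2 h3
  refine ⟨a + b, a, by omega, ha, ?_, ?_⟩
  · have : c (a * 2 + b) % 6 = c (a * 1 + b) % 6 :=
      congrArg Fin.val (h2.trans h1.symm)
    have e2 := Nat.mod_eq_of_lt (show c (a * 2 + b) < 6 from by have := hc (a*2+b) (by omega); omega)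
    have e1 := Nat.mod_eq_of_lt (show c (a * 1 + b) < 6 from by have := hc (a*1+b) (by omega); omega)
    have : c (a * 2 + b) = c (a * 1 + b) := by omega
    convert this using 2 <;> ring
  · have : c (a * 3 + b) % 6 = c (a * 1 + b) % 6 :=
      congrArg Fin.val (h3.trans h1.symm)
    have e3 := Nat.mod_eq_of_lt (show c (a * 3 + b) < 6 from by have := hc (a*3+b) (by omega); omega)
    have e1 := Nat.mod_eq_of_lt (show c (a * 1 + b) < 6 from by have := hc (a*1+b) (by omega); omega)
    have : c (a * 3 + b) = c (a * 1 + b) := by omega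
    convert this using 2 <;> ring

/-- By compactness, the defining set of `vdW 5 3` is nonempty. -/
lemma vdw_set_nonempty :
    {m : ℕ | 0 < m ∧ ∀ c : ℕ → ℕ, IsColoring 5 m c → ContainsAP 3 m c}.Nonempty := by
  classical
  by_contra hne
  rw [Set.not_nonempty_iff_eq_empty] at hne
  have hall : ∀ m : ℕ, ∃ c : ℕ → ℕ, IsColoring 5 (m + 1) c ∧ ¬ ContainsAP 3 (m + 1) c := by
    intro m
    by_contra h
    push_neg at h
    have : (m + 1) ∈ {m : ℕ | 0 < m ∧ ∀ c : ℕ → ℕ, IsColoring 5 m c → ContainsAP 3 m c} := by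
      exact ⟨Nat.succ_pos m, h⟩
    rw [hne] at this; exact this
  choose f hf1 hf2 using hall
  set g : ℕ → ℕ → ℕ := fun m i => if 1 ≤ i ∧ i ≤ m + 1 then f m i else 1 with hg
  have hgrange : ∀ m i, 1 ≤ g m i ∧ g m i ≤ 5 := by
    intro m i
    by_cases h : 1 ≤ i ∧ i ≤ m + 1
    · simp only [hg, if_pos h]; exact hf1 m i h.1 h.2
    · simp only [hg, if_neg h]; omega
  have hgno : ∀ m a d, 0 < a → 0 < d → a + 2 * d ≤ m + 1 →
      ¬ (g m (a + d) = g m a ∧ g m (a + 2 * d) = g m a) := by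
    rintro m a d ha hd hle ⟨h1, h2⟩
    apply hf2 m
    refine ⟨a, d, ha, hd, by simpa using hle, fun j hj => ?_⟩
    have e : ∀ x, 1 ≤ x → x ≤ m + 1 → g m x = f m x := fun x h1 h2 => by
      simp only [hg]
      rw [if_pos (show 1 ≤ x ∧ x ≤ m + 1 from ⟨h1, h2⟩)]
    interval_cases j
    · simp
    · have := h1
      rw [e (a + d) (by omega) (by omega), e a (by omega) (by omega)] at this
      simpa using this
    · have := h2
      rw [e (a + 2 * d) (by omega) (by omega), e a (by omega) (by omega)] at this
      simpa using this
  haveI : (Filter.atTop : Filter ℕ).NeBot := Filter.atTop_neBot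
  set U : Ultrafilter ℕ := Ultrafilter.of Filter.atTop with hU
  have hUle : (U : Filter ℕ) ≤ Filter.atTop := Ultrafilter.of_le _
  have hlim : ∀ i : ℕ, ∃ v : ℕ, {m | g m i = v} ∈ U := by
    intro i
    have huniv : (⋃ v ∈ (Finset.Icc 1 5 : Finset ℕ), {m | g m i = v}) ∈ U := by
      have : (⋃ v ∈ (Finset.Icc 1 5 : Finset ℕ), {m | g m i = v}) = Set.univ := by
        ext m
        simp only [Set.mem_iUnion, Set.mem_setOf_eq, Set.mem_univ, iff_true]
        exact ⟨g m i, by simpa using (hgrange m i), rfl⟩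
      rw [this]; exact Filter.univ_mem
    obtain ⟨v, _, hv⟩ := (Ultrafilter.finite_biUnion_mem_iff (Finset.Icc 1 5).finite_toSet).mp huniv
    exact ⟨v, hv⟩
  choose c hc using hlim
  have hcb : ∀ i, 1 ≤ i → c i ≤ 5 := by
    intro i _
    obtain ⟨m, hm⟩ := Ultrafilter.nonempty_of_mem (hc i)
    have := hgrange m i
    simp only [Set.mem_setOf_eq] at hm
    omega
  obtain ⟨a, d, ha, hd, h1, h2⟩ := infinite_vdw c hcb
  have hbig : {m : ℕ | a + 2 * d ≤ m + 1} ∈ U :=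
    hUle (Filter.mem_of_superset (Filter.mem_atTop (a + 2 * d)) (fun m hm => by
      simp only [Set.mem_setOf_eq] at hm ⊢; omega))
  have hmem : ({m | g m a = c a} ∩ {m | g m (a+d) = c (a+d)} ∩ {m | g m (a+2*d) = c (a+2*d)}
      ∩ {m : ℕ | a + 2 * d ≤ m + 1}) ∈ U :=
    Filter.inter_mem (Filter.inter_mem (Filter.inter_mem (hc a) (hc (a+d))) (hc (a+2*d))) hbig
  obtain ⟨m, hm⟩ := Ultrafilter.nonempty_of_mem hmem
  simp only [Set.mem_inter_iff, Set.mem_setOf_eq] at hm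
  exact hgno m a d ha hd hm.2 ⟨by rw [hm.1.1.2, h1, ← hm.1.1.1], by rw [hm.1.2, h2, ← hm.1.1.1]⟩

theorem vdW_five_three_gt :
    vdW 5 3 > 125 ∧
    ∃ c : ℕ → ℕ, IsColoring 5 125 c ∧ ¬ ContainsAP 3 125 c := by
  have hbound : ∀ m ∈ {m : ℕ | 0 < m ∧ ∀ c : ℕ → ℕ, IsColoring 5 m c → ContainsAP 3 m c},
      125 < m := by
    rintro m ⟨hm0, hall⟩
    by_contra h
    push_neg at h
    have hcol : IsColoring 5 m vdwCol := fun i h1 h2 =>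
      vdwCol_isColoring i h1 (le_trans h2 h)
    obtain ⟨a, d, ha, hd, hle, hj⟩ := hall vdwCol hcol
    exact vdwCol_noAP ⟨a, d, ha, hd, by omega, hj⟩
  refine ⟨?_, vdwCol, vdwCol_isColoring, vdwCol_noAP⟩
  exact hbound _ (Nat.sInf_mem vdw_set_nonempty)
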